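/- arXiv:2404.10924 — 2 statements merged into one kernel-verified Lean document; each statement's English description precedes it below -/
import Mathlib

section
/- Suppose every pair in P ∪ N has distinct components (i.e., (x,y) ∈ P ∪ N implies x ≠ y). Then for every word w ∈ W and every index j, the gradient equals the exact loss difference caused by flipping bit j of w's vector: Δ[w,j] = L(B) − L(B^{(w,j)}), where B^{(w,j)} is the embedding agreeing with B except that bit j of B(w) is flipped. -/
/-- Flip bit `j` of the binary vector `a`. -/
def flipBit {d : ℕ} (a : Fin d → Fin 2) (j : Fin d) : Fin d → Fin 2 :=
  Function.update a j (1 - a j)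

/-- Positive violation count: number of indices `k` with `a k = 0` and `b k = 1`. -/
def posViol {d : ℕ} (a b : Fin d → Fin 2) : ℕ :=
  (Finset.univ.filter (fun k => a k = 0 ∧ b k = 1)).card

/-- Good-bit count: number of indices `k` with `a k = 0` and `b k = 1`. -/
def goodCount {d : ℕ} (a b : Fin d → Fin 2) : ℕ :=
  (Finset.univ.filter (fun k => a k = 0 ∧ b k = 1)).card

/-- Negative violation indicator: `1` if the good-bit count is `0`, else `0`. -/
def negViol {d : ℕ} (a b : Fin d → Fin 2) : ℕ :=
  if goodCount a b = 0 then 1 else 0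

/-- A bit interpreted as a real number. -/
def bitR {d : ℕ} (a : Fin d → Fin 2) (j : Fin d) : ℝ := ((a j : ℕ) : ℝ)

/-- Total loss of an embedding. -/
noncomputable def totalLoss {W : Type*} {d : ℕ} (α β : ℝ) (P N : Finset (W × W))
    (B : W → Fin d → Fin 2) : ℝ :=
  α * ∑ p ∈ P, (posViol (B p.1) (B p.2) : ℝ) +
  β * ∑ p ∈ N, (negViol (B p.1) (B p.2) : ℝ)

/-- The gradient of the loss at `B` with respect to word `w` and bit `j`. -/
noncomputable def grad {W : Type*} [DecidableEq W] {d : ℕ} (α β : ℝ)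
    (P N : Finset (W × W)) (B : W → Fin d → Fin 2) (w : W) (j : Fin d) : ℝ :=
  α * ∑ p ∈ P.filter (fun p => p.1 = w), bitR (B p.2) j * (1 - 2 * bitR (B w) j) +
  α * ∑ p ∈ P.filter (fun p => p.2 = w), (1 - bitR (B p.1) j) * (2 * bitR (B w) j - 1) +
  β * ∑ p ∈ N.filter (fun p => p.1 = w ∧ goodCount (B w) (B p.2) = 0),
        bitR (B w) j * bitR (B p.2) j +
  β * ∑ p ∈ N.filter (fun p => p.2 = w ∧ goodCount (B p.1) (B w) = 0),
        (1 - bitR (B p.1) j) * (1 - bitR (B w) j) -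
  β * ∑ p ∈ N.filter (fun p => p.1 = w ∧ goodCount (B w) (B p.2) = 1),
        bitR (B p.2) j * (1 - bitR (B w) j) -
  β * ∑ p ∈ N.filter (fun p => p.2 = w ∧ goodCount (B p.1) (B w) = 1),
        bitR (B w) j * (1 - bitR (B p.1) j)

lemma fin2_cases (x : Fin 2) : x = 0 ∨ x = 1 := by omega

lemma posViol_cast {d : ℕ} (a b : Fin d → Fin 2) :
    (posViol a b : ℝ) = ∑ k, (1 - bitR a k) * bitR b k := by
  rw [posViol, Finset.card_filter]
  push_cast
  refine Finset.sum_congr rfl fun k _ => ?_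
  rcases fin2_cases (a k) with h | h <;> rcases fin2_cases (b k) with h' | h' <;>
    simp [bitR, h, h']

lemma flipBit_same {d : ℕ} (a : Fin d → Fin 2) (j : Fin d) : flipBit a j j = 1 - a j := by
  simp [flipBit]

lemma flipBit_ne {d : ℕ} (a : Fin d → Fin 2) (j k : Fin d) (h : k ≠ j) :
    flipBit a j k = a k := Function.update_of_ne h _ _

lemma posViol_flip_fst {d : ℕ} (a b : Fin d → Fin 2) (j : Fin d) :
    (posViol a b : ℝ) - posViol (flipBit a j) b = bitR b j * (1 - 2 * bitR a j) := by
  rw [posViol_cast, posViol_cast, ← Finset.sum_sub_distrib]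
  rw [Finset.sum_eq_single j]
  · rcases fin2_cases (a j) with h | h <;>
      simp [bitR, flipBit_same, h] <;> ring
  · intro k _ hk
    simp [bitR, flipBit_ne a j k hk]
  · simp

lemma posViol_flip_snd {d : ℕ} (a b : Fin d → Fin 2) (j : Fin d) :
    (posViol a b : ℝ) - posViol a (flipBit b j) = (1 - bitR a j) * (2 * bitR b j - 1) := by
  rw [posViol_cast, posViol_cast, ← Finset.sum_sub_distrib]
  rw [Finset.sum_eq_single j]
  · rcases fin2_cases (b j) with h | h <;>
      simp [bitR, flipBit_same, h] <;> ring
  · intro k _ hk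
    simp [bitR, flipBit_ne b j k hk]
  · simp

lemma goodCount_split {d : ℕ} (a b : Fin d → Fin 2) (j : Fin d) :
    goodCount a b = ((Finset.univ.erase j).filter (fun k => a k = 0 ∧ b k = 1)).card
      + (if a j = 0 ∧ b j = 1 then 1 else 0) := by
  rw [goodCount, Finset.card_filter, Finset.card_filter,
    ← Finset.add_sum_erase _ _ (Finset.mem_univ j), add_comm]

lemma goodCount_flip_fst {d : ℕ} (a b : Fin d → Fin 2) (j : Fin d) :
    goodCount (flipBit a j) b =
      ((Finset.univ.erase j).filter (fun k => a k = 0 ∧ b k = 1)).card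
      + (if a j = 1 ∧ b j = 1 then 1 else 0) := by
  rw [goodCount_split (flipBit a j) b j]
  congr 1
  · apply congrArg
    apply Finset.filter_congr
    intro k hk
    rw [flipBit_ne a j k (Finset.ne_of_mem_erase hk)]
  · rw [flipBit_same]
    rcases fin2_cases (a j) with h | h <;> simp [h]

lemma goodCount_flip_snd {d : ℕ} (a b : Fin d → Fin 2) (j : Fin d) :
    goodCount a (flipBit b j) =
      ((Finset.univ.erase j).filter (fun k => a k = 0 ∧ b k = 1)).card
      + (if a j = 0 ∧ b j = 0 then 1 else 0) := by
  rw [goodCount_split a (flipBit b j) j]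
  congr 1
  · apply congrArg
    apply Finset.filter_congr
    intro k hk
    rw [flipBit_ne b j k (Finset.ne_of_mem_erase hk)]
  · rw [flipBit_same]
    rcases fin2_cases (b j) with h | h <;> simp [h]

lemma key_arith (S t t' : ℕ) (ht : t ≤ 1) (ht' : t' ≤ 1) (hex : t = 0 ∨ t' = 0) :
    ((if S + t = 0 then (1:ℝ) else 0) - (if S + t' = 0 then 1 else 0)) =
    (if S + t = 0 then (t' : ℝ) else 0) - (if S + t = 1 then (t : ℝ) else 0) := by
  interval_cases t <;> interval_cases t' <;>
    rcases Nat.eq_zero_or_pos S with h | h <;> simp_all <;> omega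

lemma negViol_flip_fst {d : ℕ} (a b : Fin d → Fin 2) (j : Fin d) :
    (negViol a b : ℝ) - negViol (flipBit a j) b =
      (if goodCount a b = 0 then bitR a j * bitR b j else 0) -
      (if goodCount a b = 1 then bitR b j * (1 - bitR a j) else 0) := by
  rw [negViol, negViol, goodCount_split a b j, goodCount_flip_fst a b j]
  set S := ((Finset.univ.erase j).filter (fun k => a k = 0 ∧ b k = 1)).card with hS
  rcases fin2_cases (a j) with h | h <;> rcases fin2_cases (b j) with h' | h' <;>
    simp only [h, h', bitR] <;>
    · have := key_arith S (if a j = 0 ∧ b j = 1 then 1 else 0)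
        (if a j = 1 ∧ b j = 1 then 1 else 0) (by split <;> simp) (by split <;> simp)
        (by rcases fin2_cases (a j) with h | h <;> simp [h])
      simp only [h, h'] at this ⊢
      simp_all
      try omega

lemma negViol_flip_snd {d : ℕ} (a b : Fin d → Fin 2) (j : Fin d) :
    (negViol a b : ℝ) - negViol a (flipBit b j) =
      (if goodCount a b = 0 then (1 - bitR a j) * (1 - bitR b j) else 0) -
      (if goodCount a b = 1 then bitR b j * (1 - bitR a j) else 0) := by
  rw [negViol, negViol, goodCount_split a b j, goodCount_flip_snd a b j]
  set S := ((Finset.univ.erase j).filter (fun k => a k = 0 ∧ b k = 1)).card with hS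
  rcases fin2_cases (a j) with h | h <;> rcases fin2_cases (b j) with h' | h' <;>
    · have := key_arith S (if a j = 0 ∧ b j = 1 then 1 else 0)
        (if a j = 0 ∧ b j = 0 then 1 else 0) (by split <;> simp) (by split <;> simp)
        (by rcases fin2_cases (b j) with h2 | h2 <;> simp [h2])
      simp only [h, h', bitR] at this ⊢
      simp_all
      try omega

theorem grad_eq_loss_diff {W : Type*} [DecidableEq W] {d : ℕ} (α β : ℝ)
    (hα : 0 < α) (hβ : 0 < β) (P N : Finset (W × W))
    (hdist : ∀ p ∈ P ∪ N, p.1 ≠ p.2)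
    (B : W → Fin d → Fin 2) (w : W) (j : Fin d) :
    grad α β P N B w j =
      totalLoss α β P N B -
      totalLoss α β P N (Function.update B w (flipBit (B w) j)) := by
  set B' := Function.update B w (flipBit (B w) j) with hB'
  have hBw : B' w = flipBit (B w) j := Function.update_self _ _ _
  have hBo : ∀ v, v ≠ w → B' v = B v := fun v hv => Function.update_of_ne hv _ _
  have hP : ∀ p ∈ P,
      ((if p.1 = w then bitR (B p.2) j * (1 - 2 * bitR (B w) j) else 0) +
       (if p.2 = w then (1 - bitR (B p.1) j) * (2 * bitR (B w) j - 1) else 0)) =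
      (posViol (B p.1) (B p.2) : ℝ) - posViol (B' p.1) (B' p.2) := by
    intro p hp
    have hne : p.1 ≠ p.2 := hdist p (Finset.mem_union_left _ hp)
    by_cases h1 : p.1 = w
    · have h2 : p.2 ≠ w := fun h => hne (h1.trans h.symm)
      rw [h1, hBo p.2 h2, if_pos rfl, if_neg h2, add_zero, hBw]
      exact (posViol_flip_fst (B w) (B p.2) j).symm
    · by_cases h2 : p.2 = w
      · rw [h2, hBo p.1 h1, if_neg h1, if_pos rfl, zero_add, hBw]
        exact (posViol_flip_snd (B p.1) (B w) j).symm
      · rw [if_neg h1, if_neg h2, hBo p.1 h1, hBo p.2 h2]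
        ring
  have hN : ∀ p ∈ N,
      ((if p.1 = w ∧ goodCount (B w) (B p.2) = 0 then bitR (B w) j * bitR (B p.2) j else 0) +
       (if p.2 = w ∧ goodCount (B p.1) (B w) = 0 then (1 - bitR (B p.1) j) * (1 - bitR (B w) j) else 0) -
       (if p.1 = w ∧ goodCount (B w) (B p.2) = 1 then bitR (B p.2) j * (1 - bitR (B w) j) else 0) -
       (if p.2 = w ∧ goodCount (B p.1) (B w) = 1 then bitR (B w) j * (1 - bitR (B p.1) j) else 0)) =
      (negViol (B p.1) (B p.2) : ℝ) - negViol (B' p.1) (B' p.2) := by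
    intro p hp
    have hne : p.1 ≠ p.2 := hdist p (Finset.mem_union_right _ hp)
    by_cases h1 : p.1 = w
    · have h2 : p.2 ≠ w := fun h => hne (h1.trans h.symm)
      have e2 : ∀ (c : Prop) [Decidable c] (x : ℝ), (if p.2 = w ∧ c then x else 0) = 0 :=
        fun c _ x => if_neg (fun hc => h2 hc.1)
      rw [h1, hBo p.2 h2, hBw, e2, e2, add_zero, sub_zero,
        negViol_flip_fst (B w) (B p.2) j]
      simp only [if_pos rfl, true_and]
    · by_cases h2 : p.2 = w
      · have e1 : ∀ (c : Prop) [Decidable c] (x : ℝ), (if p.1 = w ∧ c then x else 0) = 0 :=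
          fun c _ x => if_neg (fun hc => h1 hc.1)
        rw [h2, hBo p.1 h1, hBw, e1, e1, zero_add,
          negViol_flip_snd (B p.1) (B w) j]
        simp only [if_pos rfl, true_and]
        ring
      · rw [hBo p.1 h1, hBo p.2 h2]
        simp [h1, h2]
  have EP := Finset.sum_congr rfl hP
  have EN := Finset.sum_congr rfl hN
  simp only [Finset.sum_add_distrib, Finset.sum_sub_distrib] at EP EN
  rw [totalLoss, totalLoss, grad, Finset.sum_filter, Finset.sum_filter, Finset.sum_filter,
    Finset.sum_filter, Finset.sum_filter, Finset.sum_filter]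
  linear_combination α * EP + β * EN
end

section
/- (Lemma 3.) Let the bias b_ℓ = 0. Suppose every pair in N has distinct components. Fix a word w ∈ W and an index j, and let Δ⁻[w,j] be the negative-loss gradient at B with respect to bit j of B(w). If Δ⁻[w,j] ≥ 0, then flipping bit j of B(w) does not increase the negative loss L_N(B) = β·Σ_{(a',b')∈N} ν(B(a'),B(b')); precisely, L_N(B^{(w,j)}) = L_N(B) − Δ⁻[w,j] ≤ L_N(B). -/
/-- The negative loss of an embedding. -/
noncomputable def negLoss {W : Type*} {d : ℕ} (β : ℝ) (N : Finset (W × W))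
    (B : W → Fin d → Fin 2) : ℝ :=
  β * ∑ p ∈ N, (negViol (B p.1) (B p.2) : ℝ)

/-- The negative-loss gradient at `B` with respect to word `w` and bit `j`. -/
noncomputable def gradNeg {W : Type*} [DecidableEq W] {d : ℕ} (β : ℝ)
    (N : Finset (W × W)) (B : W → Fin d → Fin 2) (w : W) (j : Fin d) : ℝ :=
  β * ∑ p ∈ N.filter (fun p => p.1 = w ∧ goodCount (B w) (B p.2) = 0),
        bitR (B w) j * bitR (B p.2) j +
  β * ∑ p ∈ N.filter (fun p => p.2 = w ∧ goodCount (B p.1) (B w) = 0),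
        (1 - bitR (B p.1) j) * (1 - bitR (B w) j) -
  β * ∑ p ∈ N.filter (fun p => p.1 = w ∧ goodCount (B w) (B p.2) = 1),
        bitR (B p.2) j * (1 - bitR (B w) j) -
  β * ∑ p ∈ N.filter (fun p => p.2 = w ∧ goodCount (B p.1) (B w) = 1),
        bitR (B w) j * (1 - bitR (B p.1) j)

lemma goodCount_eq {d : ℕ} (a b : Fin d → Fin 2) (j : Fin d) :
    goodCount a b = (if a j = 0 ∧ b j = 1 then 1 else 0) +
      ∑ k ∈ Finset.univ.erase j, (if a k = 0 ∧ b k = 1 then 1 else 0) := by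
  rw [goodCount, Finset.card_filter, ← Finset.add_sum_erase _ _ (Finset.mem_univ j)]

lemma goodCount_flipBit_left {d : ℕ} (a b : Fin d → Fin 2) (j : Fin d) :
    goodCount (flipBit a j) b = (if 1 - a j = 0 ∧ b j = 1 then 1 else 0) +
      ∑ k ∈ Finset.univ.erase j, (if a k = 0 ∧ b k = 1 then 1 else 0) := by
  rw [goodCount_eq (flipBit a j) b j]
  congr 1
  · simp [flipBit]
  · refine Finset.sum_congr rfl fun k hk => ?_
    have hkj : k ≠ j := (Finset.mem_erase.mp hk).1
    simp [flipBit, Function.update_of_ne hkj]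

lemma goodCount_flipBit_right {d : ℕ} (a b : Fin d → Fin 2) (j : Fin d) :
    goodCount a (flipBit b j) = (if a j = 0 ∧ 1 - b j = 1 then 1 else 0) +
      ∑ k ∈ Finset.univ.erase j, (if a k = 0 ∧ b k = 1 then 1 else 0) := by
  rw [goodCount_eq a (flipBit b j) j]
  congr 1
  · simp [flipBit]
  · refine Finset.sum_congr rfl fun k hk => ?_
    have hkj : k ≠ j := (Finset.mem_erase.mp hk).1
    simp [flipBit, Function.update_of_ne hkj]

lemma negViol_flip_left {d : ℕ} (a b : Fin d → Fin 2) (j : Fin d) :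
    ((negViol (flipBit a j) b : ℕ) : ℝ) = (negViol a b : ℝ) -
      ((if goodCount a b = 0 then bitR a j * bitR b j else 0) -
       (if goodCount a b = 1 then bitR b j * (1 - bitR a j) else 0)) := by
  have h1 := goodCount_eq a b j
  have h2 := goodCount_flipBit_left a b j
  have ha : a j = 0 ∨ a j = 1 := by omega
  have hb : b j = 0 ∨ b j = 1 := by omega
  rcases ha with ha | ha <;> rcases hb with hb | hb <;>
    simp [negViol, bitR, ha, hb, h1, h2] <;> split_ifs <;> norm_num <;> omega

lemma negViol_flip_right {d : ℕ} (a b : Fin d → Fin 2) (j : Fin d) :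
    ((negViol a (flipBit b j) : ℕ) : ℝ) = (negViol a b : ℝ) -
      ((if goodCount a b = 0 then (1 - bitR a j) * (1 - bitR b j) else 0) -
       (if goodCount a b = 1 then bitR b j * (1 - bitR a j) else 0)) := by
  have h1 := goodCount_eq a b j
  have h2 := goodCount_flipBit_right a b j
  have ha : a j = 0 ∨ a j = 1 := by omega
  have hb : b j = 0 ∨ b j = 1 := by omega
  rcases ha with ha | ha <;> rcases hb with hb | hb <;>
    simp [negViol, bitR, ha, hb, h1, h2] <;> split_ifs <;> norm_num <;> omega

/-- Lemma 3: with zero bias, if the negative-loss gradient is nonnegative, then flipping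
bit `j` of `B w` does not increase the negative loss. -/
theorem flip_not_increase_negLoss {W : Type*} [DecidableEq W] {d : ℕ}
    (β : ℝ) (hβ : 0 < β) (N : Finset (W × W)) (hdist : ∀ p ∈ N, p.1 ≠ p.2)
    (B : W → Fin d → Fin 2) (w : W) (j : Fin d)
    (hgrad : 0 ≤ gradNeg β N B w j) :
    negLoss β N (Function.update B w (flipBit (B w) j))
        = negLoss β N B - gradNeg β N B w j ∧
    negLoss β N (Function.update B w (flipBit (B w) j)) ≤ negLoss β N B := by
  set B' := Function.update B w (flipBit (B w) j) with hB'
  have hkey : ∀ p ∈ N, (negViol (B' p.1) (B' p.2) : ℝ) =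
      (negViol (B p.1) (B p.2) : ℝ) -
      (((if p.1 = w ∧ goodCount (B w) (B p.2) = 0 then bitR (B w) j * bitR (B p.2) j else 0) +
        (if p.2 = w ∧ goodCount (B p.1) (B w) = 0 then (1 - bitR (B p.1) j) * (1 - bitR (B w) j) else 0)) -
       ((if p.1 = w ∧ goodCount (B w) (B p.2) = 1 then bitR (B p.2) j * (1 - bitR (B w) j) else 0) +
        (if p.2 = w ∧ goodCount (B p.1) (B w) = 1 then bitR (B w) j * (1 - bitR (B p.1) j) else 0))) := by
    intro p hp
    by_cases h1 : p.1 = w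
    · have h2 : p.2 ≠ w := fun h => hdist p hp (h1.trans h.symm)
      have e1 : B' p.1 = flipBit (B w) j := by rw [h1, hB', Function.update_self]
      have e2 : B' p.2 = B p.2 := by rw [hB', Function.update_of_ne h2]
      rw [e1, e2, negViol_flip_left, h1]
      simp [h2]
    · have e1 : B' p.1 = B p.1 := by rw [hB', Function.update_of_ne h1]
      by_cases h2 : p.2 = w
      · have e2 : B' p.2 = flipBit (B w) j := by rw [h2, hB', Function.update_self]
        rw [e1, e2, h2, negViol_flip_right]
        simp [h1]
      · have e2 : B' p.2 = B p.2 := by rw [hB', Function.update_of_ne h2]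
        rw [e1, e2]
        simp [h1, h2]
  have e : negLoss β N B' = negLoss β N B - gradNeg β N B w j := by
    unfold negLoss gradNeg
    rw [Finset.sum_congr rfl hkey]
    simp only [Finset.sum_filter, Finset.sum_sub_distrib, Finset.sum_add_distrib]
    ring
  exact ⟨e, by rw [e]; linarith⟩
end
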